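/- Every derivation in G3Int + {(id*), (¬_l), (¬_r), (⊃_l*), (lift)} − {(id), (⊥_l), (⊃_l), (ref), (tra)} of a sequent of the form ⇒ w : A contains only treelike sequents, with w the root of the graph of each sequent in the derivation. -/
import Mathlib


/-- Formulae of propositional intuitionistic logic over the signature
`{¬, ∧, ∨, ⊃}`. -/
inductive Fml : Type
  | atom : ℕ → Fml
  | neg  : Fml → Fml
  | and  : Fml → Fml → Fml
  | or   : Fml → Fml → Fml
  | imp  : Fml → Fml → Fml

abbrev RAtoms := Multiset (ℕ × ℕ)
abbrev LFml := Multiset (ℕ × Fml)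

/-- The label `v` does not occur in the sequent `R, Γ ⇒ Δ`. -/
def freshL (v : ℕ) (R : RAtoms) (Γ Δ : LFml) : Prop :=
  (∀ q ∈ R, v ≠ q.1 ∧ v ≠ q.2) ∧ (∀ q ∈ Γ, v ≠ q.1) ∧ (∀ q ∈ Δ, v ≠ q.1)


/-- A labelled sequent `R, Γ ⇒ Δ`. -/
structure LSeq where
  R : RAtoms
  Γ : LFml
  Δ : LFml

/-- Derivations (as trees) in the calculus
`G3Int + {(id*), (¬_l), (¬_r), (⊃_l*), (lift)} − {(id), (⊥_l), (⊃_l), (ref), (tra)}`,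
i.e. with rules `(id*), (∧_l), (∧_r), (∨_l), (∨_r), (⊃_r), (¬_l), (¬_r), (⊃_l*), (lift)`. -/
inductive Deriv : LSeq → Type
  | idStar (R : RAtoms) (Γ Δ : LFml) (w p : ℕ) :
      Deriv ⟨R, (w, Fml.atom p) ::ₘ Γ, (w, Fml.atom p) ::ₘ Δ⟩
  | andL (R : RAtoms) (Γ Δ : LFml) (w : ℕ) (A B : Fml) :
      Deriv ⟨R, (w, A) ::ₘ (w, B) ::ₘ Γ, Δ⟩ →
      Deriv ⟨R, (w, Fml.and A B) ::ₘ Γ, Δ⟩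
  | andR (R : RAtoms) (Γ Δ : LFml) (w : ℕ) (A B : Fml) :
      Deriv ⟨R, Γ, (w, A) ::ₘ Δ⟩ → Deriv ⟨R, Γ, (w, B) ::ₘ Δ⟩ →
      Deriv ⟨R, Γ, (w, Fml.and A B) ::ₘ Δ⟩
  | orL (R : RAtoms) (Γ Δ : LFml) (w : ℕ) (A B : Fml) :
      Deriv ⟨R, (w, A) ::ₘ Γ, Δ⟩ → Deriv ⟨R, (w, B) ::ₘ Γ, Δ⟩ →
      Deriv ⟨R, (w, Fml.or A B) ::ₘ Γ, Δ⟩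
  | orR (R : RAtoms) (Γ Δ : LFml) (w : ℕ) (A B : Fml) :
      Deriv ⟨R, Γ, (w, A) ::ₘ (w, B) ::ₘ Δ⟩ →
      Deriv ⟨R, Γ, (w, Fml.or A B) ::ₘ Δ⟩
  | impLStar (R : RAtoms) (Γ Δ : LFml) (w : ℕ) (A B : Fml) :
      Deriv ⟨R, (w, Fml.imp A B) ::ₘ Γ, (w, A) ::ₘ Δ⟩ →
      Deriv ⟨R, (w, Fml.imp A B) ::ₘ (w, B) ::ₘ Γ, Δ⟩ →
      Deriv ⟨R, (w, Fml.imp A B) ::ₘ Γ, Δ⟩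
  | impR (R : RAtoms) (Γ Δ : LFml) (w v : ℕ) (A B : Fml) :
      freshL v R Γ ((w, Fml.imp A B) ::ₘ Δ) →
      Deriv ⟨(w, v) ::ₘ R, (v, A) ::ₘ Γ, (v, B) ::ₘ Δ⟩ →
      Deriv ⟨R, Γ, (w, Fml.imp A B) ::ₘ Δ⟩
  | negL (R : RAtoms) (Γ Δ : LFml) (w : ℕ) (A : Fml) :
      Deriv ⟨R, (w, Fml.neg A) ::ₘ Γ, (w, A) ::ₘ Δ⟩ →
      Deriv ⟨R, (w, Fml.neg A) ::ₘ Γ, Δ⟩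
  | negR (R : RAtoms) (Γ Δ : LFml) (w v : ℕ) (A : Fml) :
      freshL v R Γ ((w, Fml.neg A) ::ₘ Δ) →
      Deriv ⟨(w, v) ::ₘ R, (v, A) ::ₘ Γ, Δ⟩ →
      Deriv ⟨R, Γ, (w, Fml.neg A) ::ₘ Δ⟩
  | lift (R : RAtoms) (Γ Δ : LFml) (w u : ℕ) (A : Fml) :
      Deriv ⟨(w, u) ::ₘ R, (w, A) ::ₘ (u, A) ::ₘ Γ, Δ⟩ →
      Deriv ⟨(w, u) ::ₘ R, (w, A) ::ₘ Γ, Δ⟩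

/-- `d.All P` holds when every sequent occurring in the derivation `d`
satisfies `P`. -/
def Deriv.All (P : LSeq → Prop) : {s : LSeq} → Deriv s → Prop
  | _, .idStar R Γ Δ w p =>
      P ⟨R, (w, Fml.atom p) ::ₘ Γ, (w, Fml.atom p) ::ₘ Δ⟩
  | _, .andL R Γ Δ w A B d =>
      P ⟨R, (w, Fml.and A B) ::ₘ Γ, Δ⟩ ∧ d.All P
  | _, .andR R Γ Δ w A B d e =>
      P ⟨R, Γ, (w, Fml.and A B) ::ₘ Δ⟩ ∧ d.All P ∧ e.All P
  | _, .orL R Γ Δ w A B d e =>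
      P ⟨R, (w, Fml.or A B) ::ₘ Γ, Δ⟩ ∧ d.All P ∧ e.All P
  | _, .orR R Γ Δ w A B d =>
      P ⟨R, Γ, (w, Fml.or A B) ::ₘ Δ⟩ ∧ d.All P
  | _, .impLStar R Γ Δ w A B d e =>
      P ⟨R, (w, Fml.imp A B) ::ₘ Γ, Δ⟩ ∧ d.All P ∧ e.All P
  | _, .impR R Γ Δ w v A B _ d =>
      P ⟨R, Γ, (w, Fml.imp A B) ::ₘ Δ⟩ ∧ d.All P
  | _, .negL R Γ Δ w A d =>
      P ⟨R, (w, Fml.neg A) ::ₘ Γ, Δ⟩ ∧ d.All P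
  | _, .negR R Γ Δ w v A _ d =>
      P ⟨R, Γ, (w, Fml.neg A) ::ₘ Δ⟩ ∧ d.All P
  | _, .lift R Γ Δ w u A d =>
      P ⟨(w, u) ::ₘ R, (w, A) ::ₘ Γ, Δ⟩ ∧ d.All P

/-- The labels occurring in a sequent (the vertices of its graph). -/
def LSeq.labels (s : LSeq) : Set ℕ :=
  {x | (∃ q ∈ s.R, x = q.1 ∨ x = q.2) ∨ (∃ q ∈ s.Γ, x = q.1) ∨ (∃ q ∈ s.Δ, x = q.1)}

/-- `IsPath R w v l` : `l` is (the list of successive vertices of) a directed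
path from `w` to `v` along the edges given by the relational atoms `R`. -/
inductive IsPath (R : RAtoms) : ℕ → ℕ → List ℕ → Prop
  | nil (w : ℕ) : IsPath R w w []
  | cons {w u v : ℕ} {l : List ℕ} :
      (w, u) ∈ R → IsPath R u v l → IsPath R w v (u :: l)

/-- The graph of the sequent `s` is treelike with root `w`: `w` is a vertex
and there is a unique directed path from `w` to every other vertex. -/
def TreelikeRoot (s : LSeq) (w : ℕ) : Prop :=
  w ∈ s.labels ∧ ∀ v ∈ s.labels, v ≠ w → ∃! l, IsPath s.R w v l

/-- Strengthened invariant: every label is reachable from `w` by a unique path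
(including `w` itself, whose unique path must be the empty one). -/
def TreeInv (s : LSeq) (w : ℕ) : Prop :=
  w ∈ s.labels ∧ ∀ v ∈ s.labels, ∃! l, IsPath s.R w v l

lemma TreeInv.treelike {s : LSeq} {w : ℕ} (h : TreeInv s w) : TreelikeRoot s w :=
  ⟨h.1, fun v hv _ => h.2 v hv⟩

lemma inv_congr {R : RAtoms} {Γ Δ Γ' Δ' : LFml} {w : ℕ}
    (h : TreeInv ⟨R, Γ, Δ⟩ w)
    (hlab : LSeq.labels ⟨R, Γ, Δ⟩ = LSeq.labels ⟨R, Γ', Δ'⟩) :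
    TreeInv ⟨R, Γ', Δ'⟩ w := by
  refine ⟨hlab ▸ h.1, fun v hv => h.2 v (hlab ▸ hv)⟩

lemma labels_consR (R : RAtoms) (Γ Δ : LFml) (p : ℕ × ℕ) :
    LSeq.labels ⟨p ::ₘ R, Γ, Δ⟩ =
      insert p.1 (insert p.2 (LSeq.labels ⟨R, Γ, Δ⟩)) := by
  ext x
  simp only [LSeq.labels, Multiset.mem_cons, Set.mem_setOf_eq, Set.mem_insert_iff]
  constructor
  · rintro (⟨q, (rfl | hq), (rfl | rfl)⟩ | h | h)
    · exact Or.inl rfl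
    · exact Or.inr (Or.inl rfl)
    · exact Or.inr (Or.inr (Or.inl ⟨q, hq, Or.inl rfl⟩))
    · exact Or.inr (Or.inr (Or.inl ⟨q, hq, Or.inr rfl⟩))
    · exact Or.inr (Or.inr (Or.inr (Or.inl h)))
    · exact Or.inr (Or.inr (Or.inr (Or.inr h)))
  · rintro (rfl | rfl | ⟨q, hq, h⟩ | h | h)
    · exact Or.inl ⟨p, Or.inl rfl, Or.inl rfl⟩
    · exact Or.inl ⟨p, Or.inl rfl, Or.inr rfl⟩
    · exact Or.inl ⟨q, Or.inr hq, h⟩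
    · exact Or.inr (Or.inl h)
    · exact Or.inr (Or.inr h)

lemma labels_consG (R : RAtoms) (Γ Δ : LFml) (p : ℕ × Fml) :
    LSeq.labels ⟨R, p ::ₘ Γ, Δ⟩ = insert p.1 (LSeq.labels ⟨R, Γ, Δ⟩) := by
  ext x
  simp only [LSeq.labels, Multiset.mem_cons, Set.mem_setOf_eq, Set.mem_insert_iff]
  constructor
  · rintro (h | ⟨q, (rfl | hq), rfl⟩ | h)
    · exact Or.inr (Or.inl h)
    · exact Or.inl rfl
    · exact Or.inr (Or.inr (Or.inl ⟨q, hq, rfl⟩))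
    · exact Or.inr (Or.inr (Or.inr h))
  · rintro (rfl | h | ⟨q, hq, rfl⟩ | h)
    · exact Or.inr (Or.inl ⟨p, Or.inl rfl, rfl⟩)
    · exact Or.inl h
    · exact Or.inr (Or.inl ⟨q, Or.inr hq, rfl⟩)
    · exact Or.inr (Or.inr h)

lemma labels_consD (R : RAtoms) (Γ Δ : LFml) (p : ℕ × Fml) :
    LSeq.labels ⟨R, Γ, p ::ₘ Δ⟩ = insert p.1 (LSeq.labels ⟨R, Γ, Δ⟩) := by
  ext x
  simp only [LSeq.labels, Multiset.mem_cons, Set.mem_setOf_eq, Set.mem_insert_iff]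
  constructor
  · rintro (h | h | ⟨q, (rfl | hq), rfl⟩)
    · exact Or.inr (Or.inl h)
    · exact Or.inr (Or.inr (Or.inl h))
    · exact Or.inl rfl
    · exact Or.inr (Or.inr (Or.inr ⟨q, hq, rfl⟩))
  · rintro (rfl | h | h | ⟨q, hq, rfl⟩)
    · exact Or.inr (Or.inr ⟨p, Or.inl rfl, rfl⟩)
    · exact Or.inl h
    · exact Or.inr (Or.inl h)
    · exact Or.inr (Or.inr ⟨q, Or.inr hq, rfl⟩)

lemma isPath_append {R : RAtoms} {x y z : ℕ} {l m : List ℕ}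
    (h1 : IsPath R x y l) (h2 : IsPath R y z m) : IsPath R x z (l ++ m) := by
  induction h1 with
  | nil => exact h2
  | cons he _ ih => exact .cons he (ih h2)

lemma isPath_mono {R : RAtoms} {e : ℕ × ℕ} {x y : ℕ} {l : List ℕ}
    (h : IsPath R x y l) : IsPath (e ::ₘ R) x y l := by
  induction h with
  | nil => exact .nil _
  | cons he _ ih => exact .cons (Multiset.mem_cons_of_mem he) ih

lemma path_drop {R : RAtoms} {w' v : ℕ}
    (hfresh : ∀ q ∈ R, v ≠ q.1 ∧ v ≠ q.2) (hw' : v ≠ w') :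
    ∀ {x u : ℕ} {l : List ℕ}, IsPath ((w', v) ::ₘ R) x u l → x ≠ v → u ≠ v →
      IsPath R x u l := by
  intro x u l h
  induction h with
  | nil => intro _ _; exact .nil _
  | @cons a b c l' he hp ih =>
    intro hx hu
    rcases Multiset.mem_cons.1 he with he | he
    · injection he with h1 h2
      subst h1; subst h2
      cases hp with
      | nil => exact absurd rfl hu
      | cons he2 _ =>
        rcases Multiset.mem_cons.1 he2 with he2 | he2
        · exact absurd (congrArg Prod.fst he2) hw'
        · exact absurd rfl (hfresh _ he2).1
    · exact .cons he (ih (Ne.symm (hfresh _ he).2) hu)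

lemma path_to_fresh {R : RAtoms} {w' v : ℕ}
    (hfresh : ∀ q ∈ R, v ≠ q.1 ∧ v ≠ q.2) (hw' : v ≠ w') :
    ∀ {x u : ℕ} {l : List ℕ}, IsPath ((w', v) ::ₘ R) x u l → u = v → x ≠ v →
      ∃ l', l = l' ++ [v] ∧ IsPath R x w' l' := by
  intro x u l h
  induction h with
  | nil => intro huv hx; exact absurd huv hx
  | @cons a b c l' he hp ih =>
    intro huv hx
    rcases Multiset.mem_cons.1 he with he | he
    · injection he with h1 h2
      subst h1; subst h2
      cases hp with
      | nil => exact ⟨[], rfl, .nil _⟩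
      | cons he2 _ =>
        rcases Multiset.mem_cons.1 he2 with he2 | he2
        · exact absurd (congrArg Prod.fst he2) hw'
        · exact absurd rfl (hfresh _ he2).1
    · have hb : b ≠ v := Ne.symm (hfresh _ he).2
      obtain ⟨l'', rfl, hl''⟩ := ih huv hb
      exact ⟨b :: l'', rfl, .cons he hl''⟩

lemma inv_extend {R : RAtoms} {Γ Δ Γ' Δ' : LFml} {w w' v : ℕ}
    (hinv : TreeInv ⟨R, Γ, Δ⟩ w)
    (hw' : w' ∈ LSeq.labels ⟨R, Γ, Δ⟩)
    (hv : v ∉ LSeq.labels ⟨R, Γ, Δ⟩)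
    (hlab : LSeq.labels ⟨(w', v) ::ₘ R, Γ', Δ'⟩ =
      insert v (LSeq.labels ⟨R, Γ, Δ⟩)) :
    TreeInv ⟨(w', v) ::ₘ R, Γ', Δ'⟩ w := by
  have hfresh : ∀ q ∈ R, v ≠ q.1 ∧ v ≠ q.2 := by
    intro q hq
    constructor
    · rintro rfl; exact hv (Or.inl ⟨q, hq, Or.inl rfl⟩)
    · rintro rfl; exact hv (Or.inl ⟨q, hq, Or.inr rfl⟩)
  have hw'v : v ≠ w' := fun h => hv (h ▸ hw')
  have hwv : w ≠ v := fun h => hv (h ▸ hinv.1)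
  constructor
  · rw [hlab]; exact Or.inr hinv.1
  · intro u hu
    rw [hlab] at hu
    rcases Set.mem_insert_iff.1 hu with rfl | hu
    · obtain ⟨l, hl, hluniq⟩ := hinv.2 w' hw'
      refine ⟨l ++ [u],
        isPath_append (isPath_mono hl)
          (.cons (Multiset.mem_cons_self _ _) (.nil _)), ?_⟩
      intro m hm
      obtain ⟨m', rfl, hm'⟩ := path_to_fresh hfresh hw'v hm rfl hwv
      rw [hluniq m' hm']
    · have huv : u ≠ v := fun h => hv (h ▸ hu)
      obtain ⟨l, hl, hluniq⟩ := hinv.2 u hu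
      exact ⟨l, isPath_mono hl, fun m hm =>
        hluniq m (path_drop hfresh hw'v hm hwv huv)⟩

lemma all_of_inv {w : ℕ} : ∀ {s : LSeq} (d : Deriv s),
    TreeInv s w → d.All (fun s => TreelikeRoot s w) := by
  intro s d
  induction d with
  | idStar R Γ Δ w' p => exact fun h => h.treelike
  | andL R Γ Δ w' A B d ih =>
    intro h
    refine ⟨h.treelike, ih (inv_congr h ?_)⟩
    simp only [labels_consR, labels_consG, labels_consD]
    try (ext x; simp only [Set.mem_insert_iff]; tauto)
  | andR R Γ Δ w' A B d e ih ih' =>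
    intro h
    refine ⟨h.treelike, ih (inv_congr h ?_), ih' (inv_congr h ?_)⟩ <;>
      · simp only [labels_consR, labels_consG, labels_consD]
        try (ext x; simp only [Set.mem_insert_iff]; tauto)
  | orL R Γ Δ w' A B d e ih ih' =>
    intro h
    refine ⟨h.treelike, ih (inv_congr h ?_), ih' (inv_congr h ?_)⟩ <;>
      · simp only [labels_consR, labels_consG, labels_consD]
        try (ext x; simp only [Set.mem_insert_iff]; tauto)
  | orR R Γ Δ w' A B d ih =>
    intro h
    refine ⟨h.treelike, ih (inv_congr h ?_)⟩
    simp only [labels_consR, labels_consG, labels_consD]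
    try (ext x; simp only [Set.mem_insert_iff]; tauto)
  | impLStar R Γ Δ w' A B d e ih ih' =>
    intro h
    refine ⟨h.treelike, ih (inv_congr h ?_), ih' (inv_congr h ?_)⟩ <;>
      · simp only [labels_consR, labels_consG, labels_consD]
        try (ext x; simp only [Set.mem_insert_iff]; tauto)
  | impR R Γ Δ w' v A B hf d ih =>
    intro h
    refine ⟨h.treelike, ih ?_⟩
    have hw' : w' ∈ LSeq.labels ⟨R, Γ, (w', Fml.imp A B) ::ₘ Δ⟩ :=
      Or.inr (Or.inr ⟨(w', Fml.imp A B), Multiset.mem_cons_self _ _, rfl⟩)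
    have hv : v ∉ LSeq.labels ⟨R, Γ, (w', Fml.imp A B) ::ₘ Δ⟩ := by
      rintro (⟨q, hq, (rfl | rfl)⟩ | ⟨q, hq, rfl⟩ | ⟨q, hq, rfl⟩)
      · exact (hf.1 q hq).1 rfl
      · exact (hf.1 q hq).2 rfl
      · exact hf.2.1 q hq rfl
      · exact hf.2.2 q hq rfl
    refine inv_extend h hw' hv ?_
    simp only [labels_consR, labels_consG, labels_consD]
    try (ext x; simp only [Set.mem_insert_iff]; tauto)
  | negL R Γ Δ w' A d ih =>
    intro h
    refine ⟨h.treelike, ih (inv_congr h ?_)⟩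
    simp only [labels_consR, labels_consG, labels_consD]
    try (ext x; simp only [Set.mem_insert_iff]; tauto)
  | negR R Γ Δ w' v A hf d ih =>
    intro h
    refine ⟨h.treelike, ih ?_⟩
    have hw' : w' ∈ LSeq.labels ⟨R, Γ, (w', Fml.neg A) ::ₘ Δ⟩ :=
      Or.inr (Or.inr ⟨(w', Fml.neg A), Multiset.mem_cons_self _ _, rfl⟩)
    have hv : v ∉ LSeq.labels ⟨R, Γ, (w', Fml.neg A) ::ₘ Δ⟩ := by
      rintro (⟨q, hq, (rfl | rfl)⟩ | ⟨q, hq, rfl⟩ | ⟨q, hq, rfl⟩)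
      · exact (hf.1 q hq).1 rfl
      · exact (hf.1 q hq).2 rfl
      · exact hf.2.1 q hq rfl
      · exact hf.2.2 q hq rfl
    refine inv_extend h hw' hv ?_
    simp only [labels_consR, labels_consG, labels_consD]
    try (ext x; simp only [Set.mem_insert_iff]; tauto)
  | lift R Γ Δ w' u A d ih =>
    intro h
    refine ⟨h.treelike, ?_⟩
    apply ih
    have hlab : LSeq.labels ⟨(w', u) ::ₘ R, (w', A) ::ₘ Γ, Δ⟩ =
        LSeq.labels ⟨(w', u) ::ₘ R, (w', A) ::ₘ (u, A) ::ₘ Γ, Δ⟩ := by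
      simp only [labels_consR, labels_consG, labels_consD]
      try (ext x; simp only [Set.mem_insert_iff]; tauto)
    exact ⟨hlab ▸ h.1, fun v hv => h.2 v (hlab ▸ hv)⟩

/-- Every derivation in
`G3Int + {(id*), (¬_l), (¬_r), (⊃_l*), (lift)} − {(id), (⊥_l), (⊃_l), (ref), (tra)}`
of a labelled formula `w : A` (i.e. of the sequent `⇒ w : A`) contains only
treelike sequents with root `w`. -/
theorem stmt13 (w : ℕ) (A : Fml) (d : Deriv ⟨(0 : RAtoms), (0 : LFml), {(w, A)}⟩) :
    d.All (fun s => TreelikeRoot s w) := by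
  apply all_of_inv
  constructor
  · exact Or.inr (Or.inr ⟨(w, A), Multiset.mem_singleton_self _, rfl⟩)
  · rintro v (⟨q, hq, _⟩ | ⟨q, hq, _⟩ | ⟨q, hq, rfl⟩)
    · exact absurd hq (Multiset.notMem_zero q)
    · exact absurd hq (Multiset.notMem_zero q)
    · rw [Multiset.mem_singleton] at hq
      subst hq
      refine ⟨[], .nil _, fun m hm => ?_⟩
      cases hm with
      | nil => rfl
      | cons he _ => exact absurd he (Multiset.notMem_zero _)
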